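/- Let F be a totally real number field, p an odd prime, K the unique quadratic subfield of F(ζ_p)/F, and γ̄: G_K → k^× a character that is nontrivial even after restriction to G_{F(ζ_p)}. Let K(γ̄) be the fixed field of ker γ̄, let L = F(ζ_p) ∩ K(γ̄), and assume #ε(G_L) > 1. Then the F_p[G_K]-module k(εγ̄) has no Jordan–Hölder factors in common with k (trivial action), k(γ̄), or k(γ̄^{−1}); moreover the characters εγ̄ and γ̄ are nontrivial. -/

import Mathlib

noncomputable section
open Polynomial

/-- The absolute Galois group of a field `F`. -/
abbrev Gal (F : Type*) [Field F] : Type _ := AlgebraicClosure F ≃ₐ[F] AlgebraicClosure F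

/-- The canonical map from the absolute Galois group to ring automorphisms. -/
def galToRingAut (F : Type*) [Field F] :
    Gal F →* (AlgebraicClosure F ≃+* AlgebraicClosure F) where
  toFun σ := σ.toRingEquiv
  map_one' := rfl
  map_mul' _ _ := rfl

/-- The mod `p` cyclotomic character `ε` of the absolute Galois group of `F`. -/
def modCyc (F : Type*) [Field F] (p : ℕ) [NeZero p]
    (hcard : Nat.card (rootsOfUnity p (AlgebraicClosure F)) = p) :
    Gal F →* (ZMod p)ˣ :=
  (modularCyclotomicCharacter (AlgebraicClosure F) hcard).comp (galToRingAut F)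

/-- The inclusion `F_p^× → k^×` for a ring `k` of characteristic `p`. -/
def unitsToField (k : Type*) [CommRing k] (p : ℕ) [CharP k p] : (ZMod p)ˣ →* kˣ :=
  Units.map (ZMod.castHom dvd_rfl k).toMonoidHom

/-- `K(ψ)`: the fixed field of the kernel of a character `ψ` of `G_K = Gal(Ω/K)`,
regarded as an intermediate field of `Ω/F`. -/
def charFixedField {F : Type*} [Field F] (K : IntermediateField F (AlgebraicClosure F))
    {A : Type*} [CommGroup A] (ψ : ↥K.fixingSubgroup →* A) :
    IntermediateField F (AlgebraicClosure F) :=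
  IntermediateField.fixedField ((ψ.ker).map K.fixingSubgroup.subtype)

/-- Functoriality of `GL₂` along a ring homomorphism. -/
def mapGL {R S : Type*} [CommRing R] [CommRing S] (f : R →+* S) :
    GL (Fin 2) R →* GL (Fin 2) S :=
  Units.map (RingHom.toMonoidHom f.mapMatrix)

/-- A number field is totally real if all of its infinite places are real. -/
def TotallyReal (F : Type*) [Field F] [NumberField F] : Prop :=
  ∀ v : NumberField.InfinitePlace F, v.IsReal

/-- The finite places of a number field `F`. -/
abbrev Place (F : Type*) [Field F] [NumberField F] : Type _ :=
  IsDedekindDomain.HeightOneSpectrum (NumberField.RingOfIntegers F)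

/-- The cardinality `q_v` of the residue field at a finite place `v`. -/
def qv {F : Type*} [Field F] [NumberField F] (v : Place F) : ℕ :=
  Ideal.absNorm v.asIdeal

/-- The `F_p[Γ]`-module structure `k(ψ)` on `k` attached to a character
`ψ : Γ → kˣ`: the group `Γ` acts on the additive group of `k` through `ψ` by
multiplication. -/
def charRep (p : ℕ) {Γ : Type*} [Group Γ] (k : Type*) [Field k] [Algebra (ZMod p) k]
    (ψ : Γ →* kˣ) : Representation (ZMod p) Γ k where
  toFun g :=
    { toFun := fun x => (ψ g : k) * x
      map_add' := fun x y => mul_add _ x y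
      map_smul' := fun c x => by simp [Algebra.smul_def]; ring }
  map_one' := by ext x; simp
  map_mul' g h := by ext x; simp [mul_assoc]

/-- Two `R`-modules have a common Jordan–Hölder factor: some simple `R`-module is a
subquotient of both. -/
def HasCommonJHFactor (R : Type*) [Ring R] (M N : Type*) [AddCommGroup M] [Module R M]
    [AddCommGroup N] [Module R N] : Prop :=
  ∃ (A B : Submodule R M) (C D : Submodule R N), B ≤ A ∧ D ≤ C ∧
    IsSimpleModule R (↥A ⧸ (Submodule.comap A.subtype B)) ∧
    Nonempty ((↥A ⧸ (Submodule.comap A.subtype B)) ≃ₗ[R]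
      (↥C ⧸ (Submodule.comap C.subtype D)))

/-! For `g ∈ G_K`, the element `g - 1 ∈ F_p[G_K]` acts on `k(ψ)` as multiplication by
`ψ g - 1`. If `χ g = 1 ≠ ψ g` it therefore kills every subquotient of `k(χ)` but no nonzero
subquotient of the finite module `k(ψ)`, so the two share no Jordan–Hölder factor. For
`ψ = εγ̄` it suffices to find such `g`: an element of `G_{F(ζ_p)}` with `γ̄ g ≠ 1` serves
against `k`, and against `k(γ̄^{±1})` any `g ∈ ker γ̄` with `ε g ≠ 1`, which exists because
otherwise `ζ_p ∈ K(γ̄)`, so `ζ_p ∈ L` and `ε(G_L) = 1`. -/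

section Subquotient

variable {R M N : Type*} [Ring R] [AddCommGroup M] [Module R M] [AddCommGroup N] [Module R N]

theorem Module.annihilator_le_annihilator_subquotient (A B : Submodule R M) :
    Module.annihilator R M ≤ Module.annihilator R (A ⧸ B.comap A.subtype) :=
  (A.subtype.annihilator_le_of_injective Subtype.val_injective).trans
    ((Submodule.mkQ _).annihilator_le_of_surjective (Submodule.mkQ_surjective _))

/-- On a finite module an injective `r • ·` maps every submodule onto itself. -/
theorem subsingleton_subquotient_of_injective_smul [Finite M] {r : R}
    (hr : Function.Injective (r • · : M → M)) {A B : Submodule R M}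
    (hann : r ∈ Module.annihilator R (A ⧸ B.comap A.subtype)) :
    Subsingleton (A ⧸ B.comap A.subtype) := by
  have hAB : ∀ a ∈ A, r • a ∈ B := fun a ha => by
    have := Module.mem_annihilator.mp hann (Submodule.Quotient.mk ⟨a, ha⟩)
    rwa [← Submodule.Quotient.mk_smul, Submodule.Quotient.mk_eq_zero, Submodule.mem_comap] at this
  have hsurj : Function.Surjective (r • · : A → A) :=
    Finite.surjective_of_injective fun a b hab => Subtype.ext (hr congr(($hab : M)))
  refine Submodule.Quotient.subsingleton_iff.mpr (Submodule.comap_subtype_eq_top.mpr ?_)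
  intro a ha
  obtain ⟨b, hb⟩ := hsurj ⟨a, ha⟩
  have hab : r • (b : M) = a := congr(Subtype.val $hb)
  exact hab ▸ hAB b b.2

theorem not_hasCommonJHFactor_of_injective_smul [Finite M] (r : R)
    (hM : Function.Injective (r • · : M → M)) (hN : r ∈ Module.annihilator R N) :
    ¬ HasCommonJHFactor R M N := by
  rintro ⟨A, B, C, D, -, -, hsimple, ⟨e⟩⟩
  have : Subsingleton (A ⧸ B.comap A.subtype) :=
    subsingleton_subquotient_of_injective_smul hM
      (e.annihilator_eq ▸ Module.annihilator_le_annihilator_subquotient C D hN)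
  have := IsSimpleModule.nontrivial R (A ⧸ B.comap A.subtype)
  exact not_subsingleton _ ‹_›

end Subquotient

instance Representation.finite_asModule {k G V : Type*} [CommSemiring k] [Monoid G]
    [AddCommMonoid V] [Module k V] [Finite V] (ρ : Representation k G V) : Finite ρ.asModule :=
  Finite.of_equiv V ρ.asModuleEquiv.symm.toEquiv

section CharRep

variable {p : ℕ} {Γ : Type*} [Group Γ] {k : Type*} [Field k] [Algebra (ZMod p) k]

theorem charRep_asModuleEquiv_sub_one_smul (ψ : Γ →* kˣ) (g : Γ)
    (x : (charRep p k ψ).asModule) :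
    (charRep p k ψ).asModuleEquiv ((MonoidAlgebra.of (ZMod p) Γ g - 1) • x) =
      ((ψ g : k) - 1) * (charRep p k ψ).asModuleEquiv x := by
  rw [sub_smul, one_smul, map_sub, Representation.asModuleEquiv_map_smul,
    Representation.asAlgebraHom_of, sub_mul, one_mul]
  rfl

theorem injective_sub_one_smul_charRep {ψ : Γ →* kˣ} {g : Γ} (hψ : ψ g ≠ 1) :
    Function.Injective
      ((MonoidAlgebra.of (ZMod p) Γ g - 1) • · : (charRep p k ψ).asModule → _) := by
  intro x y hxy
  have hα : (ψ g : k) - 1 ≠ 0 := sub_ne_zero.mpr (by simpa using hψ)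
  have := congr((charRep p k ψ).asModuleEquiv $hxy)
  rw [charRep_asModuleEquiv_sub_one_smul, charRep_asModuleEquiv_sub_one_smul] at this
  exact (charRep p k ψ).asModuleEquiv.injective (mul_left_cancel₀ hα this)

theorem sub_one_mem_annihilator_charRep {χ : Γ →* kˣ} {g : Γ} (hχ : χ g = 1) :
    MonoidAlgebra.of (ZMod p) Γ g - 1 ∈ Module.annihilator _ (charRep p k χ).asModule := by
  refine Module.mem_annihilator.mpr fun x => (charRep p k χ).asModuleEquiv.injective ?_
  rw [charRep_asModuleEquiv_sub_one_smul, hχ, Units.val_one, sub_self, zero_mul, map_zero]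

theorem not_hasCommonJHFactor_charRep [Finite k] {ψ χ : Γ →* kˣ} {g : Γ} (hψ : ψ g ≠ 1)
    (hχ : χ g = 1) :
    ¬ HasCommonJHFactor (MonoidAlgebra (ZMod p) Γ)
      (charRep p k ψ).asModule (charRep p k χ).asModule :=
  not_hasCommonJHFactor_of_injective_smul _ (injective_sub_one_smul_charRep hψ)
    (sub_one_mem_annihilator_charRep hχ)

end CharRep

section Cyclotomic

variable {p : ℕ} [Fact p.Prime] {F : Type*} [Field F]
  {hcard : Nat.card (rootsOfUnity p (AlgebraicClosure F)) = p}
  {ζ : AlgebraicClosure F}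

theorem modCyc_apply_of_isPrimitiveRoot (hζ : IsPrimitiveRoot ζ p) (σ : Gal F) :
    σ ζ = ζ ^ (modCyc F p hcard σ : ZMod p).val := by
  have := modularCyclotomicCharacter.spec _ hcard (galToRingAut F σ)
    (SetLike.coe_mem hζ.toRootsOfUnity)
  rwa [hζ.val_toRootsOfUnity_coe] at this

theorem modCyc_eq_one_iff (hζ : IsPrimitiveRoot ζ p) (σ : Gal F) :
    modCyc F p hcard σ = 1 ↔ σ ζ = ζ := by
  have hp : 1 < p := (Fact.out : p.Prime).one_lt
  rw [modCyc_apply_of_isPrimitiveRoot (hcard := hcard) hζ, ← Units.val_eq_one,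
    ← ZMod.val_eq_one hp]
  conv_rhs => rhs; rw [← pow_one ζ]
  exact ⟨fun h => by rw [h], hζ.pow_inj (ZMod.val_lt _) hp⟩

theorem map_modCyc_fixingSubgroup_eq_bot (hζ : IsPrimitiveRoot ζ p)
    {L : IntermediateField F (AlgebraicClosure F)} (hζL : ζ ∈ L) :
    L.fixingSubgroup.map (modCyc F p hcard) = ⊥ := by
  rw [Subgroup.eq_bot_iff_forall]
  rintro _ ⟨σ, hσ, rfl⟩
  exact (modCyc_eq_one_iff hζ σ).mpr ((IntermediateField.mem_fixingSubgroup_iff _ σ).mp hσ ζ hζL)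

end Cyclotomic

theorem unitsToField_injective (k : Type*) [Field k] (p : ℕ) [Fact p.Prime] [CharP k p] :
    Function.Injective (unitsToField k p) :=
  Units.map_injective (ZMod.castHom dvd_rfl k).injective

theorem mem_charFixedField_iff {F : Type*} [Field F]
    {K : IntermediateField F (AlgebraicClosure F)} {A : Type*} [CommGroup A]
    {ψ : K.fixingSubgroup →* A} {x : AlgebraicClosure F} :
    x ∈ charFixedField K ψ ↔ ∀ τ : K.fixingSubgroup, ψ τ = 1 → (τ : Gal F) x = x := by
  simp [charFixedField, IntermediateField.mem_fixedField_iff]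

theorem statement7_general
    (p : ℕ) [Fact p.Prime]
    (F : Type) [Field F]
    (hcard : Nat.card (rootsOfUnity p (AlgebraicClosure F)) = p)
    (ζ : AlgebraicClosure F) (hζ : IsPrimitiveRoot ζ p)
    -- `K` is the unique quadratic subfield of `F(ζ_p)/F`
    (K : IntermediateField F (AlgebraicClosure F))
    (hsub : (IntermediateField.adjoin F {ζ}).fixingSubgroup ≤ K.fixingSubgroup)
    -- the coefficient field `k`
    (k : Type) [Field k] [Finite k] [CharP k p] [Algebra (ZMod p) k]
    -- a character `γ̄` of `G_K`, nontrivial on `G_{F(ζ_p)}`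
    (γ : ↥K.fixingSubgroup →* kˣ)
    (hγ : ∃ σ : Gal F, ∃ hσ : σ ∈ (IntermediateField.adjoin F {ζ}).fixingSubgroup,
      γ ⟨σ, hsub hσ⟩ ≠ 1)
    -- `L = F(ζ_p) ∩ K(γ̄)`, and `#ε(G_L) > 1`
    (L : IntermediateField F (AlgebraicClosure F))
    (hL : L = IntermediateField.adjoin F {ζ} ⊓ charFixedField K γ)
    (hεL : 1 < Nat.card (Subgroup.map (modCyc F p hcard) L.fixingSubgroup)) :
    -- `ε` restricted to `G_K`, with values in `kˣ`
    ∀ εK : ↥K.fixingSubgroup →* kˣ,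
      εK = (unitsToField k p).comp ((modCyc F p hcard).comp K.fixingSubgroup.subtype) →
      (¬ HasCommonJHFactor (MonoidAlgebra (ZMod p) ↥K.fixingSubgroup)
          (charRep p k (εK * γ)).asModule (charRep p k (1 : ↥K.fixingSubgroup →* kˣ)).asModule) ∧
      (¬ HasCommonJHFactor (MonoidAlgebra (ZMod p) ↥K.fixingSubgroup)
          (charRep p k (εK * γ)).asModule (charRep p k γ).asModule) ∧
      (¬ HasCommonJHFactor (MonoidAlgebra (ZMod p) ↥K.fixingSubgroup)
          (charRep p k (εK * γ)).asModule (charRep p k γ⁻¹).asModule) ∧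
      εK * γ ≠ 1 ∧ γ ≠ 1 := by
  rintro εK rfl
  have hεK (τ : K.fixingSubgroup) :
      (unitsToField k p).comp ((modCyc F p hcard).comp K.fixingSubgroup.subtype) τ = 1 ↔
        (τ : Gal F) ζ = ζ := by
    rw [MonoidHom.comp_apply, (unitsToField_injective k p).eq_iff' (map_one _)]
    exact modCyc_eq_one_iff hζ _
  obtain ⟨σ, hσ, hγσ⟩ := hγ
  have hεσ := (hεK ⟨σ, hsub hσ⟩).mpr ((IntermediateField.mem_fixingSubgroup_iff _ σ).mp hσ ζ
    (IntermediateField.mem_adjoin_simple_self F ζ))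
  obtain ⟨τ, hγτ, hετ⟩ : ∃ τ, γ τ = 1 ∧ ¬ (τ : Gal F) ζ = ζ := by
    by_contra! h
    have hζL : ζ ∈ L := hL ▸ ⟨IntermediateField.mem_adjoin_simple_self F ζ,
      mem_charFixedField_iff.mpr h⟩
    rw [map_modCyc_fixingSubgroup_eq_bot hζ hζL, Subgroup.card_bot] at hεL
    exact lt_irrefl 1 hεL
  rw [← hεK] at hετ
  refine ⟨not_hasCommonJHFactor_charRep (g := ⟨σ, hsub hσ⟩) (by simpa [hεσ] using hγσ) rfl,
    not_hasCommonJHFactor_charRep (g := τ) (by simpa [hγτ] using hετ) hγτ,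
    not_hasCommonJHFactor_charRep (g := τ) (by simpa [hγτ] using hετ) (by simp [hγτ]),
    fun h => hγσ (by simpa [hεσ] using DFunLike.congr_fun h ⟨σ, hsub hσ⟩),
    fun h => hγσ (h ▸ rfl)⟩

/-- let `F` be a totally real number field, `p` an odd prime, `K` the
quadratic subfield of `F(ζ_p)/F`, and `γ̄ : G_K → kˣ` a character nontrivial on
`G_{F(ζ_p)}`.  Let `L = F(ζ_p) ∩ K(γ̄)` and assume `#ε(G_L) > 1`.  Then the
`F_p[G_K]`-module `k(εγ̄)` has no Jordan–Hölder factor in common with `k`, `k(γ̄)` or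
`k(γ̄⁻¹)`; moreover the characters `εγ̄` and `γ̄` are nontrivial. -/
theorem statement7
    (p : ℕ) [Fact p.Prime] (hpodd : Odd p)
    (F : Type) [Field F] [NumberField F] (hF : TotallyReal F)
    (hcard : Nat.card (rootsOfUnity p (AlgebraicClosure F)) = p)
    (ζ : AlgebraicClosure F) (hζ : IsPrimitiveRoot ζ p)
    -- `K` is the unique quadratic subfield of `F(ζ_p)/F`
    (K : IntermediateField F (AlgebraicClosure F))
    (hKζ : K ≤ IntermediateField.adjoin F {ζ}) (hK2 : Module.finrank F K = 2)
    (hsub : (IntermediateField.adjoin F {ζ}).fixingSubgroup ≤ K.fixingSubgroup)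
    -- the coefficient field `k`
    (k : Type) [Field k] [Finite k] [CharP k p] [Algebra (ZMod p) k]
    -- a character `γ̄` of `G_K`, nontrivial on `G_{F(ζ_p)}`
    (γ : ↥K.fixingSubgroup →* kˣ)
    (hγ : ∃ σ : Gal F, ∃ hσ : σ ∈ (IntermediateField.adjoin F {ζ}).fixingSubgroup,
      γ ⟨σ, hsub hσ⟩ ≠ 1)
    -- `L = F(ζ_p) ∩ K(γ̄)`, and `#ε(G_L) > 1`
    (L : IntermediateField F (AlgebraicClosure F))
    (hL : L = IntermediateField.adjoin F {ζ} ⊓ charFixedField K γ)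
    (hεL : 1 < Nat.card (Subgroup.map (modCyc F p hcard) L.fixingSubgroup)) :
    -- `ε` restricted to `G_K`, with values in `kˣ`
    ∀ εK : ↥K.fixingSubgroup →* kˣ,
      εK = (unitsToField k p).comp ((modCyc F p hcard).comp K.fixingSubgroup.subtype) →
      (¬ HasCommonJHFactor (MonoidAlgebra (ZMod p) ↥K.fixingSubgroup)
          (charRep p k (εK * γ)).asModule (charRep p k (1 : ↥K.fixingSubgroup →* kˣ)).asModule) ∧
      (¬ HasCommonJHFactor (MonoidAlgebra (ZMod p) ↥K.fixingSubgroup)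
          (charRep p k (εK * γ)).asModule (charRep p k γ).asModule) ∧
      (¬ HasCommonJHFactor (MonoidAlgebra (ZMod p) ↥K.fixingSubgroup)
          (charRep p k (εK * γ)).asModule (charRep p k γ⁻¹).asModule) ∧
      εK * γ ≠ 1 ∧ γ ≠ 1 :=
  statement7_general p F hcard ζ hζ K hsub k γ hγ L hL hεL
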